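/- arXiv:2006.06276 — 5 statements merged into one kernel-verified Lean document; each statement's English description precedes it below -/
import Mathlib

section
/- Equivalence of the regularized function ψ with f (Definition 3.1 and the following discussion): Let p ≥ 1, q > 0 and let f : (0,∞) → (0,∞) satisfy (aInc)_p with constant L_p (f(s)/s^p ≤ L_p f(t)/t^p for 0 < s ≤ t) and (aDec)_q with constant L_q (f(t)/t^q ≤ L_q f(s)/s^q for 0 < s ≤ t). Define ψ(t) := ∫₀ᵗ τ^{p−1} sup_{s∈(0,τ]} (f(s)/s^p) dτ for t > 0. Then ψ is finite and for all t > 0: ((2^p − 1)/(p L_q 2^q)) f(t) ≤ ψ(t) ≤ (L_p/p) f(t). -/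
open Set MeasureTheory

/-! The running supremum `g(τ) = sup_{(0,τ]} f(s)/s^p` is monotone, so `ψ` is the integral of a
measurable function. By (aInc)_p, `g ≤ L_p f(t)/t^p` on `(0,t]`, and integrating `τ^{p-1}` gives the
upper bound. For the lower bound keep only `(t/2, t]`, where `g ≥ f(t/2)/(t/2)^p` and, by (aDec)_q,
`f(t/2) ≥ f(t)/(L_q 2^q)`; the weight `τ^{p-1}` has mass `t^p (1 - 2^{-p})/p` there. -/

noncomputable def runningSup (F : ℝ → ℝ) (τ : ℝ) : ℝ := sSup (F '' Ioc 0 τ)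

section RunningSup

variable {F : ℝ → ℝ} {L : ℝ}

theorem bddAbove_image_Ioc_of_almostInc (hF : ∀ s t, 0 < s → s ≤ t → F s ≤ L * F t) (t : ℝ) :
    BddAbove (F '' Ioc 0 t) :=
  ⟨L * F t, by rintro _ ⟨s, hs, rfl⟩; exact hF s t hs.1 hs.2⟩

theorem le_runningSup (hF : ∀ s t, 0 < s → s ≤ t → F s ≤ L * F t) {s τ : ℝ} (hs : 0 < s)
    (hsτ : s ≤ τ) : F s ≤ runningSup F τ :=
  le_csSup (bddAbove_image_Ioc_of_almostInc hF τ) (mem_image_of_mem F ⟨hs, hsτ⟩)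

theorem runningSup_le (hF : ∀ s t, 0 < s → s ≤ t → F s ≤ L * F t) {τ t : ℝ} (hτ : 0 < τ)
    (hτt : τ ≤ t) : runningSup F τ ≤ L * F t :=
  csSup_le ((nonempty_Ioc.2 hτ).image F) <| by
    rintro _ ⟨s, hs, rfl⟩
    exact hF s t hs.1 (hs.2.trans hτt)

theorem runningSup_monotoneOn (hF : ∀ s t, 0 < s → s ≤ t → F s ≤ L * F t) :
    MonotoneOn (runningSup F) (Ioi 0) := fun _ ha b _ hab =>
  csSup_le_csSup (bddAbove_image_Ioc_of_almostInc hF b) ((nonempty_Ioc.2 ha).image F)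
    (image_mono (Ioc_subset_Ioc_right hab))

end RunningSup

section PowerWeight

variable {p t M : ℝ} {g : ℝ → ℝ}

theorem integral_Ioc_rpow_sub_one (hp : 0 < p) {a b : ℝ} (hab : a ≤ b) :
    ∫ τ in Ioc a b, τ ^ (p - 1) = (b ^ p - a ^ p) / p := by
  rw [← intervalIntegral.integral_of_le hab, integral_rpow (Or.inl (by linarith)), sub_add_cancel]

theorem integrableOn_Ioc_rpow_sub_one (hp : 0 < p) (a b : ℝ) :
    IntegrableOn (fun τ => τ ^ (p - 1)) (Ioc a b) :=
  (intervalIntegral.intervalIntegrable_rpow' (by linarith)).1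

theorem integrableOn_rpow_sub_one_mul (hp : 0 < p)
    (hg : AEMeasurable g (volume.restrict (Ioc 0 t)))
    (hg0 : ∀ τ ∈ Ioc 0 t, 0 ≤ g τ) (hgM : ∀ τ ∈ Ioc 0 t, g τ ≤ M) :
    IntegrableOn (fun τ => τ ^ (p - 1) * g τ) (Ioc 0 t) := by
  refine ((integrableOn_Ioc_rpow_sub_one hp 0 t).mul_const M).mono'
    ((measurable_id.pow_const _).aemeasurable.mul hg).aestronglyMeasurable ?_
  filter_upwards [ae_restrict_mem measurableSet_Ioc] with τ hτ
  have hτp : 0 ≤ τ ^ (p - 1) := Real.rpow_nonneg hτ.1.le _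
  rw [Real.norm_of_nonneg (mul_nonneg hτp (hg0 τ hτ))]
  exact mul_le_mul_of_nonneg_left (hgM τ hτ) hτp

theorem setIntegral_rpow_sub_one_mul_le (hp : 0 < p) (ht : 0 ≤ t)
    (hint : IntegrableOn (fun τ => τ ^ (p - 1) * g τ) (Ioc 0 t)) (hgM : ∀ τ ∈ Ioc 0 t, g τ ≤ M) :
    ∫ τ in Ioc 0 t, τ ^ (p - 1) * g τ ≤ M * (t ^ p / p) := by
  calc ∫ τ in Ioc 0 t, τ ^ (p - 1) * g τ ≤ ∫ τ in Ioc 0 t, M * τ ^ (p - 1) :=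
        setIntegral_mono_on hint ((integrableOn_Ioc_rpow_sub_one hp 0 t).const_mul M)
          measurableSet_Ioc fun τ hτ => by
            rw [mul_comm M]
            exact mul_le_mul_of_nonneg_left (hgM τ hτ) (Real.rpow_nonneg hτ.1.le _)
    _ = M * (t ^ p / p) := by
        rw [integral_const_mul, integral_Ioc_rpow_sub_one hp ht, Real.zero_rpow hp.ne',
          sub_zero]

theorem le_setIntegral_rpow_sub_one_mul (hp : 0 < p) {a m : ℝ} (ha : 0 ≤ a) (hat : a ≤ t)
    (hint : IntegrableOn (fun τ => τ ^ (p - 1) * g τ) (Ioc 0 t))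
    (hg0 : ∀ τ ∈ Ioc 0 t, 0 ≤ g τ) (hm : ∀ τ ∈ Ioc a t, m ≤ g τ) :
    m * ((t ^ p - a ^ p) / p) ≤ ∫ τ in Ioc 0 t, τ ^ (p - 1) * g τ := by
  have hsub : Ioc a t ⊆ Ioc 0 t := Ioc_subset_Ioc_left ha
  calc m * ((t ^ p - a ^ p) / p) = ∫ τ in Ioc a t, m * τ ^ (p - 1) := by
        rw [integral_const_mul, integral_Ioc_rpow_sub_one hp hat]
    _ ≤ ∫ τ in Ioc a t, τ ^ (p - 1) * g τ :=
        setIntegral_mono_on ((integrableOn_Ioc_rpow_sub_one hp a t).const_mul m)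
          (hint.mono_set hsub) measurableSet_Ioc fun τ hτ => by
            rw [mul_comm m]
            exact mul_le_mul_of_nonneg_left (hm τ hτ) (Real.rpow_nonneg (ha.trans hτ.1.le) _)
    _ ≤ ∫ τ in Ioc 0 t, τ ^ (p - 1) * g τ :=
        setIntegral_mono_set hint
          ((ae_restrict_mem measurableSet_Ioc).mono fun τ hτ => mul_nonneg
            (Real.rpow_nonneg hτ.1.le _) (hg0 τ hτ))
          hsub.eventuallyLE

end PowerWeight

theorem apply_le_mul_apply_half {f : ℝ → ℝ} {q Lq t : ℝ}
    (hdec : ∀ s t : ℝ, 0 < s → s ≤ t → f t / t ^ q ≤ Lq * (f s / s ^ q)) (ht : 0 < t) :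
    f t ≤ Lq * 2 ^ q * f (t / 2) := by
  have h := hdec (t / 2) t (half_pos ht) (half_le_self ht.le)
  rw [Real.div_rpow ht.le zero_le_two, div_le_iff₀ (Real.rpow_pos_of_pos ht q)] at h
  have htq : t ^ q ≠ 0 := (Real.rpow_pos_of_pos ht q).ne'
  have h2q : (2 : ℝ) ^ q ≠ 0 := (Real.rpow_pos_of_pos two_pos q).ne'
  calc f t ≤ Lq * (f (t / 2) / (t ^ q / 2 ^ q)) * t ^ q := h
    _ = Lq * 2 ^ q * f (t / 2) := by field_simp

theorem psi_equivalent_to_f_general (p q Lp Lq : ℝ) (hp : 1 ≤ p)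
    (hLq : 1 ≤ Lq) (f : ℝ → ℝ)
    (hfpos : ∀ t : ℝ, 0 < t → 0 < f t)
    (hinc : ∀ s t : ℝ, 0 < s → s ≤ t → f s / s ^ p ≤ Lp * (f t / t ^ p))
    (hdec : ∀ s t : ℝ, 0 < s → s ≤ t → f t / t ^ q ≤ Lq * (f s / s ^ q)) :
    ∀ t : ℝ, 0 < t →
      IntegrableOn
        (fun τ => τ ^ (p - 1) * sSup ((fun s => f s / s ^ p) '' Ioc (0:ℝ) τ))
        (Ioc (0:ℝ) t) ∧
      ((2 ^ p - 1) / (p * Lq * 2 ^ q)) * f t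
        ≤ ∫ τ in Ioc (0:ℝ) t, τ ^ (p - 1) * sSup ((fun s => f s / s ^ p) '' Ioc (0:ℝ) τ) ∧
      (∫ τ in Ioc (0:ℝ) t, τ ^ (p - 1) * sSup ((fun s => f s / s ^ p) '' Ioc (0:ℝ) τ))
        ≤ (Lp / p) * f t := by
  intro t ht
  have hp0 : 0 < p := by linarith
  let F : ℝ → ℝ := fun s => f s / s ^ p
  have hg0 : ∀ τ ∈ Ioc 0 t, 0 ≤ runningSup F τ := fun τ hτ =>
    (div_pos (hfpos τ hτ.1) (Real.rpow_pos_of_pos hτ.1 p)).le.trans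
      (le_runningSup hinc hτ.1 le_rfl)
  have hgM : ∀ τ ∈ Ioc 0 t, runningSup F τ ≤ Lp * F t := fun τ hτ =>
    runningSup_le hinc hτ.1 hτ.2
  have hint : IntegrableOn (fun τ => τ ^ (p - 1) * runningSup F τ) (Ioc 0 t) :=
    integrableOn_rpow_sub_one_mul hp0 (aemeasurable_restrict_of_monotoneOn measurableSet_Ioc
      ((runningSup_monotoneOn hinc).mono Ioc_subset_Ioi_self)) hg0 hgM
  refine ⟨hint, ?_, ?_⟩
  · have h2p : 1 ≤ (2 : ℝ) ^ p := Real.one_le_rpow one_le_two hp0.le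
    have hLq2q : 0 < Lq * 2 ^ q := mul_pos (by linarith) (Real.rpow_pos_of_pos two_pos q)
    have ht2p : (t / 2) ^ p ≠ 0 := (Real.rpow_pos_of_pos (half_pos ht) p).ne'
    calc (2 ^ p - 1) / (p * Lq * 2 ^ q) * f t
        ≤ (2 ^ p - 1) / (p * Lq * 2 ^ q) * (Lq * 2 ^ q * f (t / 2)) :=
          mul_le_mul_of_nonneg_left (apply_le_mul_apply_half hdec ht) (by positivity)
      _ = F (t / 2) * ((t ^ p - (t / 2) ^ p) / p) := by
          simp only [F, Real.div_rpow ht.le zero_le_two]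
          field_simp
      _ ≤ _ :=
          le_setIntegral_rpow_sub_one_mul hp0 (half_pos ht).le (half_le_self ht.le) hint hg0
            fun τ hτ => le_runningSup hinc (half_pos ht) hτ.1.le
  · calc _ ≤ Lp * F t * (t ^ p / p) := setIntegral_rpow_sub_one_mul_le hp0 ht.le hint hgM
      _ = Lp / p * f t := by
          have htp : t ^ p ≠ 0 := (Real.rpow_pos_of_pos ht p).ne'
          simp only [F]
          field_simp

/-- **Definition 3.1 and following discussion**: the regularization
`ψ(t) = ∫₀ᵗ τ^{p-1} sup_{s ∈ (0,τ]} f(s)/s^p dτ` of a function `f` satisfying (aInc)_p and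
(aDec)_q is finite and comparable to `f`:
`((2^p - 1)/(p L_q 2^q)) f(t) ≤ ψ(t) ≤ (L_p/p) f(t)`. -/
theorem psi_equivalent_to_f (p q Lp Lq : ℝ) (hp : 1 ≤ p) (hq : 0 < q)
    (hLp : 1 ≤ Lp) (hLq : 1 ≤ Lq) (f : ℝ → ℝ)
    (hfpos : ∀ t : ℝ, 0 < t → 0 < f t)
    (hinc : ∀ s t : ℝ, 0 < s → s ≤ t → f s / s ^ p ≤ Lp * (f t / t ^ p))
    (hdec : ∀ s t : ℝ, 0 < s → s ≤ t → f t / t ^ q ≤ Lq * (f s / s ^ q)) :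
    ∀ t : ℝ, 0 < t →
      IntegrableOn
        (fun τ => τ ^ (p - 1) * sSup ((fun s => f s / s ^ p) '' Ioc (0:ℝ) τ))
        (Ioc (0:ℝ) t) ∧
      ((2 ^ p - 1) / (p * Lq * 2 ^ q)) * f t
        ≤ ∫ τ in Ioc (0:ℝ) t, τ ^ (p - 1) * sSup ((fun s => f s / s ^ p) '' Ioc (0:ℝ) τ) ∧
      (∫ τ in Ioc (0:ℝ) t, τ ^ (p - 1) * sSup ((fun s => f s / s ^ p) '' Ioc (0:ℝ) τ))
        ≤ (Lp / p) * f t :=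
  psi_equivalent_to_f_general p q Lp Lq hp hLq f hfpos hinc hdec
end

section
/- Iteration lemma for small exponents (implicit in the proof of Theorem 3.2): Let Q ∈ (0,1), b ≥ 0, c > 0, A > 0, R > 0, and let (Λ_k)_{k≥1} be a sequence of real numbers with Λ_k ≥ R for every k. If Λ_k ≥ c · 2^{bk} · A · Λ_{k+1}^Q for every k ≥ 1, then Λ₁ ≥ (cA)^{1/(1−Q)}. -/
open Set Filter

/-- `a 0 ≥ Q ^ n * a n ≥ Q ^ n * m → 0`. -/
theorem nonneg_of_mul_succ_le {Q m : ℝ} {a : ℕ → ℝ} (hQ0 : 0 ≤ Q) (hQ1 : Q < 1)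
    (hbdd : ∀ k, m ≤ a k) (hstep : ∀ k, Q * a (k + 1) ≤ a k) : 0 ≤ a 0 := by
  have hiter : ∀ n, Q ^ n * a n ≤ a 0 := by
    intro n
    induction n with
    | zero => simp
    | succ n ih =>
      calc Q ^ (n + 1) * a (n + 1) = Q ^ n * (Q * a (n + 1)) := by ring
        _ ≤ Q ^ n * a n := mul_le_mul_of_nonneg_left (hstep n) (pow_nonneg hQ0 n)
        _ ≤ a 0 := ih
  have hlim : Tendsto (fun n => Q ^ n * m) atTop (nhds 0) := by
    simpa using (tendsto_pow_atTop_nhds_zero_of_lt_one hQ0 hQ1).mul_const m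
  exact le_of_tendsto' hlim fun n =>
    (mul_le_mul_of_nonneg_left (hbdd n) (pow_nonneg hQ0 n)).trans (hiter n)

/-- In logarithmic variables `a k = log Λ k - log K / (1 - Q)` the recursion becomes
`Q * a (k + 1) ≤ a k`. -/
theorem rpow_one_div_one_sub_le_of_mul_rpow_succ_le {Q K R : ℝ} {Λ : ℕ → ℝ} (hQ0 : 0 ≤ Q)
    (hQ1 : Q < 1) (hK : 0 < K) (hR : 0 < R) (hlow : ∀ k, R ≤ Λ k)
    (hrec : ∀ k, K * Λ (k + 1) ^ Q ≤ Λ k) : K ^ (1 / (1 - Q)) ≤ Λ 0 := by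
  have hpos : ∀ k, 0 < Λ k := fun k => hR.trans_le (hlow k)
  have h1Q : 1 - Q ≠ 0 := by linarith
  have hlog : ∀ k, Real.log K + Q * Real.log (Λ (k + 1)) ≤ Real.log (Λ k) := fun k => by
    have := Real.log_le_log (by have := hpos (k + 1); positivity) (hrec k)
    rwa [Real.log_mul hK.ne' (Real.rpow_pos_of_pos (hpos _) Q).ne', Real.log_rpow (hpos _)]
      at this
  have hsplit : Real.log K / (1 - Q) = Real.log K + Q * (Real.log K / (1 - Q)) := by
    field_simp
    ring
  have hnonneg := nonneg_of_mul_succ_le (m := Real.log R - Real.log K / (1 - Q))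
    (a := fun k => Real.log (Λ k) - Real.log K / (1 - Q)) hQ0 hQ1
    (fun k => by simpa using Real.log_le_log hR (hlow k))
    (fun k => by linarith [hlog k])
  rw [← Real.log_le_log_iff (by positivity) (hpos 0), Real.log_rpow hK]
  simp only [sub_nonneg] at hnonneg
  linarith [show 1 / (1 - Q) * Real.log K = Real.log K / (1 - Q) by ring]

/-- **Iteration lemma** (implicit in the proof of Theorem 3.2): if `Λ_k ≥ R > 0` and
`Λ_k ≥ c 2^{bk} A Λ_{k+1}^Q` for all `k ≥ 1` with `Q ∈ (0,1)`, `b ≥ 0`, `c, A > 0`,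
then `Λ₁ ≥ (cA)^{1/(1-Q)}`. -/
theorem iteration_lemma (Q b c A R : ℝ) (hQ : Q ∈ Ioo (0:ℝ) 1) (hb : 0 ≤ b)
    (hc : 0 < c) (hA : 0 < A) (hR : 0 < R) (Λ : ℕ → ℝ)
    (hlow : ∀ k : ℕ, 1 ≤ k → R ≤ Λ k)
    (hrec : ∀ k : ℕ, 1 ≤ k → c * 2 ^ (b * (k : ℝ)) * A * Λ (k + 1) ^ Q ≤ Λ k) :
    (c * A) ^ (1 / (1 - Q)) ≤ Λ 1 := by
  have hpos : ∀ k, 0 < Λ (k + 1) := fun k => hR.trans_le (hlow _ (by omega))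
  have hrec_succ : ∀ k, c * A * Λ (k + 2) ^ Q ≤ Λ (k + 1) := fun k => by
    have hpow : (1 : ℝ) ≤ 2 ^ (b * ((k + 1 : ℕ) : ℝ)) :=
      Real.one_le_rpow (by norm_num) (by positivity)
    have hΛQ : 0 ≤ Λ (k + 2) ^ Q := (Real.rpow_pos_of_pos (hpos (k + 1)) Q).le
    calc c * A * Λ (k + 2) ^ Q ≤ c * 2 ^ (b * ((k + 1 : ℕ) : ℝ)) * A * Λ (k + 2) ^ Q := by
          gcongr
          exact le_mul_of_one_le_right hc.le hpow
      _ ≤ Λ (k + 1) := hrec (k + 1) (by omega)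
  exact rpow_one_div_one_sub_le_of_mul_rpow_succ_le hQ.1.le hQ.2 (mul_pos hc hA) hR
    (fun k => hlow (k + 1) (by omega)) hrec_succ
end

section
/- The counterexample is a classical solution (Section 5): Let 1 < p < q, α > 0, c > 0 and set x₀ := c^{−(q−p)/(α(p−1))}. Define a(x) := max{−x, 0}^α and g : ℝ → (0,∞) by g(x) := c^{1/(p−1)} for x ≥ −x₀ and g(x) := (c|x|^{−α})^{1/(q−1)} for x < −x₀. Then max{g(x)^{p−1}, a(x) g(x)^{q−1}} = c for every x ∈ ℝ. Moreover, if in addition α < q−1 and α₂ := 1 − α/(q−1), then for every r > 0 the function u : (−x₀−2r, ∞) → ℝ defined by u(x) := c^{1/(q−1)}((x₀+2r)^{α₂} − |x|^{α₂})/α₂ for x ∈ (−x₀−2r, −x₀] and u(x) := u(−x₀) + (x+x₀) c^{1/(p−1)} for x > −x₀ is nonnegative, increasing and differentiable with u'(x) = g(x) for all x; hence x ↦ max{u'(x)^{p−1}, a(x) u'(x)^{q−1}} is constant equal to c, i.e. u is a classical solution of (φ'(x,u'))' = 0 for φ'(x,t) = max{t^{p−1}, a(x) t^{q−1}}. -/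
/-!
The threshold `x₀` is exactly where the two branches of `g` meet:
`(c x₀^(-α))^(1/(q-1)) = c^(1/(p-1))`. Right of `-x₀` the `p`-phase of `g` equals `c`, and
`a ≤ x₀^α` keeps the `q`-phase below `c`; left of `-x₀` the `q`-phase equals `c`, and
`g ≤ g(-x₀)` keeps the `p`-phase below `c`. The two pieces of `u` are antiderivatives of the two
branches of `g` with the same value at `-x₀`, so `u' = g > 0` on all of `ℝ`; hence `u` is
strictly increasing, and it vanishes at `-x₀ - 2r`.
-/

open Set Real

noncomputable def profile (p q α c x₀ x : ℝ) : ℝ :=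
  if -x₀ ≤ x then c ^ (1 / (p - 1)) else (c * |x| ^ (-α)) ^ (1 / (q - 1))

noncomputable def counterexample (p q c x₀ α₂ r x : ℝ) : ℝ :=
  if x ≤ -x₀ then
    c ^ (1 / (q - 1)) * (((x₀ + 2 * r) ^ α₂ - |x| ^ α₂) / α₂)
  else
    c ^ (1 / (q - 1)) * (((x₀ + 2 * r) ^ α₂ - x₀ ^ α₂) / α₂) + (x + x₀) * c ^ (1 / (p - 1))

section Profile

variable {p q α c x₀ : ℝ}

lemma profile_branches_eq_at_threshold (hp : p ≠ 1) (hq : q ≠ 1) (hα : α ≠ 0) (hc : 0 < c)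
    (hx₀ : x₀ = c ^ (-(q - p) / (α * (p - 1)))) :
    (c * x₀ ^ (-α)) ^ (1 / (q - 1)) = c ^ (1 / (p - 1)) := by
  have hp' : p - 1 ≠ 0 := sub_ne_zero.2 hp
  have hq' : q - 1 ≠ 0 := sub_ne_zero.2 hq
  rw [hx₀, ← rpow_mul hc.le, ← rpow_one_add' hc.le, ← rpow_mul hc.le]
  · congr 1
    field_simp
    ring
  · rw [show 1 + -(q - p) / (α * (p - 1)) * -α = (q - 1) / (p - 1) by field_simp; ring]
    exact div_ne_zero hq' hp'

lemma max_rpow_eq_of_le_rpow_threshold (hp : 1 < p) (hq : 1 < q) (hα : α ≠ 0) (hc : 0 < c)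
    (hx₀ : x₀ = c ^ (-(q - p) / (α * (p - 1)))) {A : ℝ} (hA : A ≤ x₀ ^ α) :
    max ((c ^ (1 / (p - 1))) ^ (p - 1)) (A * (c ^ (1 / (p - 1))) ^ (q - 1)) = c := by
  have hx₀pos : 0 < x₀ := by rw [hx₀]; positivity
  have hG : (c ^ (1 / (p - 1))) ^ (q - 1) = c * x₀ ^ (-α) := by
    rw [← profile_branches_eq_at_threshold hp.ne' hq.ne' hα hc hx₀, one_div (q - 1),
      rpow_inv_rpow (by positivity) (by linarith)]
  rw [hG, one_div, rpow_inv_rpow hc.le (by linarith)]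
  refine max_eq_left ?_
  calc A * (c * x₀ ^ (-α)) ≤ x₀ ^ α * (c * x₀ ^ (-α)) := by gcongr
    _ = c := by rw [rpow_neg hx₀pos.le]; field_simp

lemma max_rpow_eq_of_threshold_le (hp : 1 < p) (hq : 1 < q) (hα : 0 < α) (hc : 0 < c)
    (hx₀ : x₀ = c ^ (-(q - p) / (α * (p - 1)))) {t : ℝ} (ht : x₀ ≤ t) :
    max (((c * t ^ (-α)) ^ (1 / (q - 1))) ^ (p - 1))
      (t ^ α * ((c * t ^ (-α)) ^ (1 / (q - 1))) ^ (q - 1)) = c := by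
  have hx₀pos : 0 < x₀ := by rw [hx₀]; positivity
  have htpos : 0 < t := hx₀pos.trans_le ht
  have hct : t ^ α * (c * t ^ (-α)) = c := by rw [rpow_neg htpos.le]; field_simp
  rw [one_div (q - 1), rpow_inv_rpow (by positivity) (by linarith), hct]
  refine max_eq_right ?_
  calc ((c * t ^ (-α)) ^ (q - 1)⁻¹) ^ (p - 1) ≤ ((c * x₀ ^ (-α)) ^ (1 / (q - 1))) ^ (p - 1) := by
        rw [one_div]
        gcongr ((c * ?_) ^ _) ^ _
        exact rpow_le_rpow_of_nonpos hx₀pos ht (by linarith)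
    _ = c := by
        rw [profile_branches_eq_at_threshold hp.ne' hq.ne' hα.ne' hc hx₀, one_div,
          rpow_inv_rpow hc.le (by linarith)]

lemma max_rpow_profile_eq (hp : 1 < p) (hq : 1 < q) (hα : 0 < α) (hc : 0 < c)
    (hx₀ : x₀ = c ^ (-(q - p) / (α * (p - 1)))) (x : ℝ) :
    max (profile p q α c x₀ x ^ (p - 1)) (max (-x) 0 ^ α * profile p q α c x₀ x ^ (q - 1)) = c := by
  have hx₀pos : 0 < x₀ := by rw [hx₀]; positivity
  unfold profile
  split_ifs with hx
  · refine max_rpow_eq_of_le_rpow_threshold hp hq hα.ne' hc hx₀ ?_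
    exact rpow_le_rpow (le_max_right _ _) (max_le (by linarith) hx₀pos.le) hα.le
  · have hx' : x < -x₀ := not_le.1 hx
    rw [max_eq_left (by linarith : (0 : ℝ) ≤ -x), ← abs_of_neg (by linarith : x < 0)]
    exact max_rpow_eq_of_threshold_le hp hq hα hc hx₀ (by rw [abs_of_neg (by linarith)]; linarith)

lemma profile_pos (hc : 0 < c) (hx₀ : 0 ≤ x₀) (x : ℝ) : 0 < profile p q α c x₀ x := by
  unfold profile
  split_ifs with hx
  · positivity
  · have : 0 < |x| := abs_pos.2 (by linarith)
    positivity

lemma profile_eq_of_le_neg (hp : p ≠ 1) (hq : q ≠ 1) (hα : α ≠ 0) (hc : 0 < c)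
    (hx₀ : x₀ = c ^ (-(q - p) / (α * (p - 1)))) {x : ℝ} (hx : x ≤ -x₀) :
    profile p q α c x₀ x = c ^ (1 / (q - 1)) * |x| ^ (-α / (q - 1)) := by
  have hx₀pos : 0 < x₀ := by rw [hx₀]; positivity
  have hbranch : profile p q α c x₀ x = (c * |x| ^ (-α)) ^ (1 / (q - 1)) := by
    unfold profile
    split_ifs with h
    · rw [show x = -x₀ by linarith, abs_neg, abs_of_pos hx₀pos,
        profile_branches_eq_at_threshold hp hq hα hc hx₀]
    · rfl
  rw [hbranch, mul_rpow hc.le (by positivity), ← rpow_mul (abs_nonneg x)]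
  ring_nf

end Profile

lemma hasDerivAt_ite_le {F : Type*} [NormedAddCommGroup F] [NormedSpace ℝ F] {f g : ℝ → F}
    {a x : ℝ} {d : F} (hf : x ≤ a → HasDerivAt f d x) (hg : a ≤ x → HasDerivAt g d x)
    (hfg : f a = g a) : HasDerivAt (fun y => if y ≤ a then f y else g y) d x := by
  rcases lt_trichotomy x a with h | rfl | h
  · refine (hf h.le).congr_of_eventuallyEq ?_
    filter_upwards [Iio_mem_nhds h] with y hy using if_pos hy.le
  · have hL : HasDerivWithinAt (fun y => if y ≤ x then f y else g y) d (Iic x) x :=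
      (hf le_rfl).hasDerivWithinAt.congr (fun y hy => if_pos hy) (if_pos le_rfl)
    have hR : HasDerivWithinAt (fun y => if y ≤ x then f y else g y) d (Ici x) x := by
      refine (hg le_rfl).hasDerivWithinAt.congr (fun y hy => ?_) (by simp [hfg])
      rcases (mem_Ici.1 hy).eq_or_lt with rfl | hlt
      · simp [hfg]
      · exact if_neg (not_le.2 hlt)
    simpa [Iic_union_Ici] using hL.union hR
  · refine (hg h.le).congr_of_eventuallyEq ?_
    filter_upwards [Ioi_mem_nhds h] with y hy using if_neg (not_le.2 hy)

lemma hasDerivAt_const_mul_sub_abs_rpow_div {s x : ℝ} (C X : ℝ) (hs : s ≠ 0) (hx : x < 0) :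
    HasDerivAt (fun y => C * ((X ^ s - |y| ^ s) / s)) (C * |x| ^ (s - 1)) x := by
  have hneg : HasDerivAt (fun y => (-y) ^ s) (s * (-x) ^ (s - 1) * -1) x :=
    (hasDerivAt_rpow_const (Or.inl (by linarith))).comp x (hasDerivAt_neg x)
  have h := ((hneg.const_sub (X ^ s)).div_const s).const_mul C
  rw [abs_of_neg hx]
  refine (h.congr_of_eventuallyEq ?_).congr_deriv (by field_simp)
  filter_upwards [Iio_mem_nhds hx] with y hy
  rw [abs_of_neg hy]

section Counterexample

variable {p q α c x₀ α₂ r : ℝ}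

lemma hasDerivAt_counterexample (hp : p ≠ 1) (hq : q ≠ 1) (hα : α ≠ 0) (hc : 0 < c)
    (hx₀ : x₀ = c ^ (-(q - p) / (α * (p - 1)))) (hα₂ : α₂ = 1 - α / (q - 1)) (hα₂0 : α₂ ≠ 0)
    (x : ℝ) : HasDerivAt (counterexample p q c x₀ α₂ r) (profile p q α c x₀ x) x := by
  have hx₀pos : 0 < x₀ := by rw [hx₀]; positivity
  refine hasDerivAt_ite_le (fun hx => ?_) (fun hx => ?_) ?_
  · rw [profile_eq_of_le_neg hp hq hα hc hx₀ hx, show -α / (q - 1) = α₂ - 1 by rw [hα₂]; ring]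
    exact hasDerivAt_const_mul_sub_abs_rpow_div _ _ hα₂0 (by linarith)
  · rw [profile, if_pos hx]
    simpa using (((hasDerivAt_id x).add_const x₀).mul_const (c ^ (1 / (p - 1)))).const_add
      (c ^ (1 / (q - 1)) * (((x₀ + 2 * r) ^ α₂ - x₀ ^ α₂) / α₂))
  · simp [abs_of_pos hx₀pos]

lemma counterexample_neg_sub_two_mul (hx₀ : 0 ≤ x₀) (hr : 0 ≤ r) :
    counterexample p q c x₀ α₂ r (-x₀ - 2 * r) = 0 := by
  have habs : |-x₀ - 2 * r| = x₀ + 2 * r := by rw [abs_of_nonpos (by linarith)]; ring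
  simp [counterexample, habs, show -x₀ - 2 * r ≤ -x₀ by linarith]

end Counterexample

/-- **Section 5, the counterexample is a classical solution**: for the double phase
weight `a(x) = max{-x,0}^α` and `g` as below, `max{g^{p-1}, a g^{q-1}} ≡ c`; and for
`α < q - 1` the piecewise function `u` is nonnegative, increasing and differentiable on
`(-x₀ - 2r, ∞)` with `u' = g`, hence solves `(φ'(x,u'))' = 0` for
`φ'(x,t) = max{t^{p-1}, a(x) t^{q-1}}`. -/
theorem counterexample_is_solution (p q α c : ℝ) (hp : 1 < p) (hpq : p < q)
    (hα : 0 < α) (hc : 0 < c) (x₀ : ℝ)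
    (hx₀ : x₀ = c ^ (-(q - p) / (α * (p - 1)))) (a g : ℝ → ℝ)
    (ha : ∀ x : ℝ, a x = max (-x) 0 ^ α)
    (hg : ∀ x : ℝ, g x =
      if -x₀ ≤ x then c ^ (1 / (p - 1)) else (c * |x| ^ (-α)) ^ (1 / (q - 1))) :
    (∀ x : ℝ, max (g x ^ (p - 1)) (a x * g x ^ (q - 1)) = c) ∧
    (α < q - 1 → ∀ α₂ r : ℝ, α₂ = 1 - α / (q - 1) → 0 < r →
      ∀ u : ℝ → ℝ,
        (∀ x : ℝ, u x =
          if x ≤ -x₀ then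
            c ^ (1 / (q - 1)) * (((x₀ + 2 * r) ^ α₂ - |x| ^ α₂) / α₂)
          else
            c ^ (1 / (q - 1)) * (((x₀ + 2 * r) ^ α₂ - x₀ ^ α₂) / α₂)
              + (x + x₀) * c ^ (1 / (p - 1))) →
        (∀ x ∈ Ioi (-x₀ - 2 * r), 0 ≤ u x) ∧
        StrictMonoOn u (Ioi (-x₀ - 2 * r)) ∧
        (∀ x ∈ Ioi (-x₀ - 2 * r), HasDerivAt u (g x) x) ∧
        (∀ x ∈ Ioi (-x₀ - 2 * r),
          max (deriv u x ^ (p - 1)) (a x * deriv u x ^ (q - 1)) = c)) := by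
  obtain rfl : a = fun x => max (-x) 0 ^ α := funext ha
  obtain rfl : g = profile p q α c x₀ := funext hg
  have hq : 1 < q := hp.trans hpq
  have hx₀pos : 0 < x₀ := by rw [hx₀]; positivity
  have hmax := max_rpow_profile_eq hp hq hα hc hx₀
  refine ⟨hmax, fun hαq α₂ r hα₂ hr u hu => ?_⟩
  obtain rfl : u = counterexample p q c x₀ α₂ r := funext hu
  have hα₂0 : α₂ ≠ 0 := by
    have : α / (q - 1) < 1 := (div_lt_one (by linarith)).2 hαq
    rw [hα₂]; linarith
  have hderiv := hasDerivAt_counterexample (r := r) hp.ne' hq.ne' hα.ne' hc hx₀ hα₂ hα₂0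
  have hmono := strictMono_of_hasDerivAt_pos hderiv (profile_pos hc hx₀pos.le)
  refine ⟨fun x hx => ?_, hmono.strictMonoOn _, fun x _ => hderiv x, fun x _ => ?_⟩
  · rw [← counterexample_neg_sub_two_mul (p := p) (q := q) (c := c) (α₂ := α₂) hx₀pos.le hr.le]
    exact (hmono hx).le
  · rw [(hderiv x).deriv]
    exact hmax x
end

section
/- Harnack quotient identity for the counterexample (Section 5): Let 1 < p < q, 0 < α < q−1, α₂ := 1 − α/(q−1), c > 0, x₀ := c^{−(q−p)/(α(p−1))} and r > 0. Let u be defined on (−x₀−2r, ∞) by u(x) := c^{1/(q−1)}((x₀+2r)^{α₂} − |x|^{α₂})/α₂ for x ∈ (−x₀−2r, −x₀] and u(x) := u(−x₀) + (x+x₀) c^{1/(p−1)} for x > −x₀. Then u(−x₀+r)/u(−x₀) = 1 + α₂ (r/x₀) / ((1 + 2r/x₀)^{α₂} − 1). -/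
open Set

/-!
At the exchange point `-x₀` we have `a(-x₀) = x₀ ^ α`, so the slope `(c / x₀ ^ α) ^ (1/(q-1))` of the
`q`-phase equals the slope `c ^ (1/(p-1))` of the `p`-phase; this is the exponent identity
`c ^ (1/(p-1)) = c ^ (1/(q-1)) * x₀ ^ (α₂ - 1)`. With it, the constant `c ^ (1/(q-1))` cancels from
the quotient `u(-x₀+r)/u(-x₀)`, and what remains is an identity between powers of `x₀` and `x₀ + 2r`.
-/

namespace Real

theorem rpow_one_div_sub_one_eq_mul_exchange_rpow {p q α c : ℝ} (hc : 0 < c) (hp : p ≠ 1)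
    (hq : q ≠ 1) (hα : α ≠ 0) :
    c ^ (1 / (p - 1))
      = c ^ (1 / (q - 1)) * (c ^ (-(q - p) / (α * (p - 1)))) ^ (1 - α / (q - 1) - 1) := by
  have hp1 : p - 1 ≠ 0 := sub_ne_zero.2 hp
  have hq1 : q - 1 ≠ 0 := sub_ne_zero.2 hq
  rw [← rpow_mul hc.le, ← rpow_add hc]
  congr 1
  field_simp
  ring

theorem harnack_quotient_eq {x₀ r β K : ℝ} (hx₀ : 0 < x₀) (hr : 0 < r) (hβ : 0 < β)
    (hK : K ≠ 0) :
    (K * (((x₀ + 2 * r) ^ β - x₀ ^ β) / β) + r * (K * x₀ ^ (β - 1)))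
        / (K * (((x₀ + 2 * r) ^ β - x₀ ^ β) / β))
      = 1 + β * (r / x₀) / ((1 + 2 * r / x₀) ^ β - 1) := by
  have hx₀β : 0 < x₀ ^ β := rpow_pos_of_pos hx₀ β
  have hgap : x₀ ^ β < (x₀ + 2 * r) ^ β := rpow_lt_rpow hx₀.le (by linarith) hβ
  have hratio : (1 + 2 * r / x₀) ^ β = (x₀ + 2 * r) ^ β / x₀ ^ β := by
    rw [← div_rpow (by linarith) hx₀.le, add_div, div_self hx₀.ne']
  have hden : (x₀ + 2 * r) ^ β / x₀ ^ β - 1 ≠ 0 :=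
    sub_ne_zero.2 ((one_lt_div hx₀β).2 hgap).ne'
  rw [hratio, rpow_sub_one hx₀.ne']
  field_simp [sub_ne_zero.2 hgap.ne']

end Real

theorem counterexample_harnack_quotient_general (p q α c r : ℝ) (hp : 1 < p)
    (hα : 0 < α) (hαq : α < q - 1) (hc : 0 < c) (hr : 0 < r) (α₂ x₀ : ℝ)
    (hα₂ : α₂ = 1 - α / (q - 1)) (hx₀ : x₀ = c ^ (-(q - p) / (α * (p - 1))))
    (u : ℝ → ℝ)
    (hu : ∀ x : ℝ, u x =
      if x ≤ -x₀ then
        c ^ (1 / (q - 1)) * (((x₀ + 2 * r) ^ α₂ - |x| ^ α₂) / α₂)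
      else
        c ^ (1 / (q - 1)) * (((x₀ + 2 * r) ^ α₂ - x₀ ^ α₂) / α₂)
          + (x + x₀) * c ^ (1 / (p - 1))) :
    u (-x₀ + r) / u (-x₀)
      = 1 + α₂ * (r / x₀) / ((1 + 2 * r / x₀) ^ α₂ - 1) := by
  have hq1 : 0 < q - 1 := hα.trans hαq
  have hα₂pos : 0 < α₂ := by rw [hα₂, sub_pos, div_lt_one hq1]; exact hαq
  have hx₀pos : 0 < x₀ := hx₀ ▸ Real.rpow_pos_of_pos hc _
  have hslope : c ^ (1 / (p - 1)) = c ^ (1 / (q - 1)) * x₀ ^ (α₂ - 1) := by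
    rw [hα₂, hx₀]
    exact Real.rpow_one_div_sub_one_eq_mul_exchange_rpow hc hp.ne' (by linarith) hα.ne'
  have hu_exchange : u (-x₀) = c ^ (1 / (q - 1)) * (((x₀ + 2 * r) ^ α₂ - x₀ ^ α₂) / α₂) := by
    rw [hu, if_pos le_rfl, abs_neg, abs_of_pos hx₀pos]
  have hu_shift : u (-x₀ + r) = c ^ (1 / (q - 1)) * (((x₀ + 2 * r) ^ α₂ - x₀ ^ α₂) / α₂)
      + r * c ^ (1 / (p - 1)) := by
    rw [hu, if_neg (by linarith), neg_add_cancel_comm]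
  rw [hu_exchange, hu_shift, hslope]
  exact Real.harnack_quotient_eq hx₀pos hr hα₂pos (Real.rpow_pos_of_pos hc _).ne'

/-- **Section 5, Harnack quotient identity for the counterexample**:
`u(-x₀+r)/u(-x₀) = 1 + α₂ (r/x₀)/((1 + 2r/x₀)^{α₂} - 1)`. -/
theorem counterexample_harnack_quotient (p q α c r : ℝ) (hp : 1 < p) (hpq : p < q)
    (hα : 0 < α) (hαq : α < q - 1) (hc : 0 < c) (hr : 0 < r) (α₂ x₀ : ℝ)
    (hα₂ : α₂ = 1 - α / (q - 1)) (hx₀ : x₀ = c ^ (-(q - p) / (α * (p - 1))))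
    (u : ℝ → ℝ)
    (hu : ∀ x : ℝ, u x =
      if x ≤ -x₀ then
        c ^ (1 / (q - 1)) * (((x₀ + 2 * r) ^ α₂ - |x| ^ α₂) / α₂)
      else
        c ^ (1 / (q - 1)) * (((x₀ + 2 * r) ^ α₂ - x₀ ^ α₂) / α₂)
          + (x + x₀) * c ^ (1 / (p - 1))) :
    u (-x₀ + r) / u (-x₀)
      = 1 + α₂ * (r / x₀) / ((1 + 2 * r / x₀) ^ α₂ - 1) :=
  counterexample_harnack_quotient_general p q α c r hp hα hαq hc hr α₂ x₀ hα₂ hx₀ u hu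
end

section
/- (A1-s_*) for the double phase functional (proof of Corollary 5.1): Let 1 < p ≤ q, α ∈ (0,1], s ∈ (0,∞], and set s_* := ns/(n+s) (with s_* := n when s = ∞). Suppose a : ℝⁿ → [0,∞) satisfies |a(x) − a(y)| ≤ c_a |x−y|^α for all x, y, and suppose α ≥ (n/s + 1)(q−p). Then there exists a constant C ≥ 1, depending only on c_a, n, α, s and q−p, such that for every ball B ⊂ ℝⁿ with |B| ≤ 1, all x, y ∈ B, and every t with 1 ≤ t ≤ |B|^{−1/s_*}, one has t^p + a(x) t^q ≤ C (t^p + a(y) t^q). In particular, the double phase functional φ(x,t) := t^p + a(x)t^q satisfies (A1-s_*). -/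
open Set MeasureTheory Metric Module
open scoped ENNReal

/-!
Write `V = |B|` and `B = B(z, r)`, so that `r = (V / |B(0,1)|)^{1/n}`. By Hölder continuity,
`a(x) ≤ a(y) + c_a (2r)^α`, so it suffices to bound `r^α t^{q-p}` by a constant. Since
`t ≤ V^{-1/s_*}`, this quantity is at most `|B(0,1)|^{-α/n} V^{α/n - (q-p)/s_*}`, and the exponent
`α/n - (q-p)/s_*` is nonnegative precisely because `n/s_* = n/s + 1`; as `V ≤ 1` the power of `V`
is at most `1`.
-/

noncomputable def sStar (n : ℕ) (s : ℝ≥0∞) : ℝ :=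
  if s = ⊤ then n else n * s.toReal / (n + s.toReal)

lemma div_sStar {n : ℕ} {s : ℝ≥0∞} (hn : 0 < n) (hs : 0 < s) :
    (n : ℝ) / sStar n s = (if s = ⊤ then 0 else n / s.toReal) + 1 := by
  have hn' : (n : ℝ) ≠ 0 := by positivity
  unfold sStar
  split_ifs with h
  · simp [hn']
  · have hs' : s.toReal ≠ 0 := (ENNReal.toReal_pos hs.ne' h).ne'
    field_simp

lemma le_add_rpow_of_mem_ball {X : Type*} [PseudoMetricSpace X] {f : X → ℝ} {c α r : ℝ}
    {x y z : X} (hc : 0 ≤ c) (hα : 0 ≤ α) (hf : |f x - f y| ≤ c * dist x y ^ α)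
    (hx : x ∈ ball z r) (hy : y ∈ ball z r) :
    f x ≤ f y + c * (2 * r) ^ α := by
  have hxy : dist x y ≤ 2 * r := by
    linarith [dist_triangle_right x y z, mem_ball.mp hx, mem_ball.mp hy]
  have : c * dist x y ^ α ≤ c * (2 * r) ^ α := by gcongr
  linarith [le_abs_self (f x - f y)]

lemma rpow_add_mul_rpow_le {t p q A B ε K : ℝ} (ht : 0 < t) (hB : 0 ≤ B) (hK : 0 ≤ K)
    (hAB : A ≤ B + ε) (hε : ε * t ^ (q - p) ≤ K) :
    t ^ p + A * t ^ q ≤ (1 + K) * (t ^ p + B * t ^ q) := by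
  have htq : t ^ q = t ^ (q - p) * t ^ p := by rw [← Real.rpow_add ht, sub_add_cancel]
  have hKB : 0 ≤ K * (B * t ^ q) := by positivity
  calc t ^ p + A * t ^ q ≤ t ^ p + (B + ε) * t ^ q := by gcongr
    _ = t ^ p + B * t ^ q + ε * t ^ (q - p) * t ^ p := by rw [htq]; ring
    _ ≤ t ^ p + B * t ^ q + K * t ^ p := by gcongr
    _ ≤ (1 + K) * (t ^ p + B * t ^ q) := by linarith

lemma rpow_mul_rpow_le_one {V t σ β γ : ℝ} (hV₀ : 0 < V) (hV₁ : V ≤ 1) (ht₀ : 0 ≤ t)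
    (ht : t ≤ V ^ (-(1 / σ))) (hγ : 0 ≤ γ) (hγβ : γ / σ ≤ β) :
    V ^ β * t ^ γ ≤ 1 :=
  calc V ^ β * t ^ γ ≤ V ^ β * (V ^ (-(1 / σ))) ^ γ := by gcongr
    _ = V ^ (β - γ / σ) := by
      rw [← Real.rpow_mul hV₀.le, ← Real.rpow_add hV₀]; ring_nf
    _ ≤ 1 := Real.rpow_le_one hV₀.le hV₁ (sub_nonneg.2 hγβ)

section AddHaar

variable {E : Type*} [NormedAddCommGroup E] [NormedSpace ℝ E] [MeasurableSpace E]
  [FiniteDimensional ℝ E] (μ : Measure E) [μ.IsAddHaarMeasure]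

lemma addHaar_real_ball_pos (x : E) {r : ℝ} (hr : 0 < r) : 0 < μ.real (ball x r) :=
  ENNReal.toReal_pos (measure_ball_pos μ x hr).ne' measure_ball_lt_top.ne

lemma addHaar_real_ball_of_pos [BorelSpace E] (x : E) {r : ℝ} (hr : 0 < r) :
    μ.real (ball x r) = r ^ finrank ℝ E * μ.real (ball 0 1) := by
  rw [measureReal_def, Measure.addHaar_ball_of_pos μ x hr, ENNReal.toReal_mul,
    ENNReal.toReal_ofReal (by positivity), measureReal_def]

lemma rpow_eq_addHaar_real_ball_div_rpow [BorelSpace E] (x : E) {r : ℝ} (α : ℝ) (hr : 0 < r)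
    (hE : finrank ℝ E ≠ 0) :
    r ^ α = (μ.real (ball x r) / μ.real (ball 0 1)) ^ (α / finrank ℝ E) := by
  rw [addHaar_real_ball_of_pos μ x hr,
    mul_div_cancel_right₀ _ (addHaar_real_ball_pos μ 0 one_pos).ne', ← Real.rpow_natCast,
    ← Real.rpow_mul hr.le, mul_div_cancel₀ _ (by exact_mod_cast hE)]

end AddHaar

theorem double_phase_A1sStar_general (n : ℕ) (hn : 0 < n) (p q α c_a : ℝ) (s : ℝ≥0∞)
    (hpq : p ≤ q) (hα : α ∈ Ioc (0:ℝ) 1) (hca : 0 ≤ c_a) (hs : 0 < s)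
    (hαs : ((if s = ⊤ then (0:ℝ) else (n : ℝ) / s.toReal) + 1) * (q - p) ≤ α) :
    ∃ C : ℝ, 1 ≤ C ∧
      ∀ a : EuclideanSpace ℝ (Fin n) → ℝ,
        (∀ x, 0 ≤ a x) →
        (∀ x y, |a x - a y| ≤ c_a * ‖x - y‖ ^ α) →
        ∀ (z : EuclideanSpace ℝ (Fin n)) (r : ℝ), 0 < r →
          (volume (ball z r)).toReal ≤ 1 →
          ∀ x ∈ ball z r, ∀ y ∈ ball z r, ∀ t : ℝ,
            1 ≤ t →
            t ≤ (volume (ball z r)).toReal ^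
              (-(1 / (if s = ⊤ then (n : ℝ)
                      else (n : ℝ) * s.toReal / ((n : ℝ) + s.toReal)))) →
            t ^ p + a x * t ^ q ≤ C * (t ^ p + a y * t ^ q) := by
  have hfin : finrank ℝ (EuclideanSpace ℝ (Fin n)) = n := finrank_euclideanSpace_fin
  have hexp : (q - p) / sStar n s ≤ α / n := by
    rw [← div_sStar hn hs] at hαs
    rw [le_div_iff₀ (by exact_mod_cast hn)]
    calc (q - p) / sStar n s * n = n / sStar n s * (q - p) := by ring
      _ ≤ α := hαs
  set ω := volume.real (ball (0 : EuclideanSpace ℝ (Fin n)) 1)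
  have hω : 0 < ω := addHaar_real_ball_pos volume 0 one_pos
  have hK : 0 ≤ c_a * 2 ^ α / ω ^ (α / n) := by positivity
  refine ⟨1 + c_a * 2 ^ α / ω ^ (α / n), le_add_of_nonneg_right hK, ?_⟩
  intro a ha₀ ha z r hr hV x hx y hy t ht ht'
  have hV₀ : 0 < volume.real (ball z r) := addHaar_real_ball_pos volume z hr
  refine rpow_add_mul_rpow_le (by linarith) (ha₀ y) hK
    (le_add_rpow_of_mem_ball hca hα.1.le (by simpa [dist_eq_norm] using ha x y) hx hy) ?_
  calc c_a * (2 * r) ^ α * t ^ (q - p)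
      = c_a * 2 ^ α / ω ^ (α / n) * (volume.real (ball z r) ^ (α / n) * t ^ (q - p)) := by
        rw [Real.mul_rpow zero_le_two hr.le,
          rpow_eq_addHaar_real_ball_div_rpow volume z α hr (by simp [hfin, hn.ne']), hfin,
          Real.div_rpow hV₀.le hω.le]
        ring
    _ ≤ c_a * 2 ^ α / ω ^ (α / n) * 1 := by
        gcongr
        exact rpow_mul_rpow_le_one hV₀ hV (by linarith) ht' (sub_nonneg.2 hpq) hexp
    _ = c_a * 2 ^ α / ω ^ (α / n) := mul_one _

/-- **Proof of Corollary 5.1, (A1-s_*) for the double phase functional**: if `a ≥ 0` is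
`α`-Hölder with constant `c_a` and `α ≥ (n/s + 1)(q - p)`, then for every ball `B` with
`|B| ≤ 1` and `1 ≤ t ≤ |B|^{-1/s_*}` (where `s_* = ns/(n+s)`, and `s_* = n`, `n/s = 0`
for `s = ∞`) the double phase functional `t^p + a(x) t^q` is comparable at any two points
of `B`, with a constant depending only on `c_a, n, α, s, q - p`; in particular it
satisfies (A1-s_*). -/
theorem double_phase_A1sStar (n : ℕ) (hn : 0 < n) (p q α c_a : ℝ) (s : ℝ≥0∞)
    (hp : 1 < p) (hpq : p ≤ q) (hα : α ∈ Ioc (0:ℝ) 1) (hca : 0 ≤ c_a) (hs : 0 < s)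
    (hαs : ((if s = ⊤ then (0:ℝ) else (n : ℝ) / s.toReal) + 1) * (q - p) ≤ α) :
    ∃ C : ℝ, 1 ≤ C ∧
      ∀ a : EuclideanSpace ℝ (Fin n) → ℝ,
        (∀ x, 0 ≤ a x) →
        (∀ x y, |a x - a y| ≤ c_a * ‖x - y‖ ^ α) →
        ∀ (z : EuclideanSpace ℝ (Fin n)) (r : ℝ), 0 < r →
          (volume (ball z r)).toReal ≤ 1 →
          ∀ x ∈ ball z r, ∀ y ∈ ball z r, ∀ t : ℝ,
            1 ≤ t →
            t ≤ (volume (ball z r)).toReal ^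
              (-(1 / (if s = ⊤ then (n : ℝ)
                      else (n : ℝ) * s.toReal / ((n : ℝ) + s.toReal)))) →
            t ^ p + a x * t ^ q ≤ C * (t ^ p + a y * t ^ q) :=
  double_phase_A1sStar_general n hn p q α c_a s hpq hα hca hs hαs
end
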